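/- For every integer g ≥ 0 there exists a connected closed 3-colored graph with colors {0,1,2} which is a Feynman graph of the quartic complex matrix model and whose Euler characteristic equals 2 − 2g. (This is the combinatorial content of Lemma 'surjectivity in rank 2': every closed connected orientable surface, of any genus g, is represented by a vacuum Feynman graph of the complex quartic matrix model.) -/

import Mathlib

/-!  Closed colored graphs (colored tensor model / matrix model Feynman graphs). -/

/-- A closed `D`-colored graph: a finite set `W` of white vertices, a finite set `B`
of black vertices, and for each color `c : Fin D` a bijection `σ c : W ≃ B`;
the color-`c` edges are the pairs `(w, σ c w)`. -/
structure CGraph (D : ℕ) where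
  W : Type
  B : Type
  finW : Finite W
  finB : Finite B
  σ : Fin D → W ≃ B

namespace CGraph

variable {D : ℕ}

/-- The permutation `σ_d⁻¹ ∘ σ_c` of the white vertices. Its orbits are the
(cd)-bicolored faces. -/
def biperm (G : CGraph D) (c d : Fin D) : Equiv.Perm G.W :=
  (G.σ c).trans (G.σ d).symm

/-- The "same cycle" setoid of a permutation. -/
def cycleSetoid {α : Type*} (π : Equiv.Perm α) : Setoid α where
  r := π.SameCycle
  iseqv := ⟨fun _ => ⟨0, by simp⟩, fun h => h.symm, fun h h' => h.trans h'⟩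

/-- The number of cycles (orbits) of a permutation. -/
noncomputable def numCycles {α : Type*} (π : Equiv.Perm α) : ℕ :=
  Nat.card (Quotient (cycleSetoid π))

/-- Total number of bicolored faces of a closed 3-colored graph
(over the three pairs of colors). -/
noncomputable def faces (G : CGraph 3) : ℕ :=
  numCycles (G.biperm 0 1) + numCycles (G.biperm 0 2) + numCycles (G.biperm 1 2)

/-- Euler characteristic of a closed 3-colored graph:
`χ(G) = #vertices − #edges + #faces = 2|W| − 3|W| + F(G)`. -/
noncomputable def euler (G : CGraph 3) : ℤ :=
  2 * (Nat.card G.W : ℤ) - 3 * (Nat.card G.W : ℤ) + (faces G : ℤ)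

/-- Connectedness: the subgroup generated by all the permutations `σ_d⁻¹ ∘ σ_c`
acts transitively on the white vertices. -/
def Connected (G : CGraph D) : Prop :=
  ∀ v w : G.W,
    ∃ π ∈ Subgroup.closure {π : Equiv.Perm G.W | ∃ c d : Fin D, π = G.biperm c d}, π v = w

/-- The number of white vertices in the (cd)-bicolored face through `v`
(the face itself has twice as many vertices). -/
noncomputable def faceSize (G : CGraph 3) (c d : Fin 3) (v : G.W) : ℕ :=
  Nat.card {w : G.W // (G.biperm c d).SameCycle v w}

/-- A closed 3-colored graph with colors `{0,1,2}` is a Feynman graph of the quartic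
complex matrix model iff every (12)-bicolored face has exactly 4 vertices, i.e. every
orbit of `σ₂⁻¹ ∘ σ₁` has exactly 2 elements. -/
def QuarticFeynman (G : CGraph 3) : Prop :=
  ∀ v : G.W, G.faceSize 1 2 v = 2

end CGraph

/-!
Realise the graph on `W = B = ZMod (4g+2)`, the color-`c` edges being the translations by
`s c`, where `s = (2g+2, 2g+1, 0)`. The `(cd)`-faces are then the cosets of the subgroup
generated by `s c - s d`, i.e. by `1`, `2g+2` and `2g+1`: these have index `1`, `2` and `2g+1`,
and the last one has order `2`. So the graph is connected and quartic, it has `2g+4` faces,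
and `χ = -(4g+2) + 2g+4 = 2 - 2g`.
-/

namespace Equiv.Perm

theorem sameCycle_addLeft_iff {M : Type*} [AddGroup M] (a v w : M) :
    (Equiv.addLeft a).SameCycle v w ↔ w - v ∈ AddSubgroup.zmultiples a := by
  simp only [SameCycle, zsmul_addLeft, coe_addLeft, AddSubgroup.mem_zmultiples_iff,
    eq_sub_iff_add_eq]

end Equiv.Perm

namespace CGraph

open Equiv.Perm

section Translation

variable {M : Type} [AddGroup M]

theorem cycleSetoid_addLeft (a : M) :
    cycleSetoid (Equiv.addLeft a) = QuotientAddGroup.rightRel (AddSubgroup.zmultiples a) := by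
  ext v w
  rw [QuotientAddGroup.rightRel_apply, ← sub_eq_add_neg]
  exact sameCycle_addLeft_iff a v w

theorem numCycles_addLeft (a : M) :
    numCycles (Equiv.addLeft a) = (AddSubgroup.zmultiples a).index := by
  rw [numCycles, cycleSetoid_addLeft]
  exact Nat.card_congr (QuotientAddGroup.quotientRightRelEquivQuotientLeftRel _)

theorem card_sameCycle_addLeft (a v : M) :
    Nat.card {w // (Equiv.addLeft a).SameCycle v w} = addOrderOf a := by
  rw [← Nat.card_zmultiples]
  exact Nat.card_congr <| (Equiv.subRight v).subtypeEquiv fun w => sameCycle_addLeft_iff a v w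

end Translation

theorem connected_of_sameCycle {D : ℕ} (G : CGraph D) (c d : Fin D)
    (h : ∀ v w, (G.biperm c d).SameCycle v w) : G.Connected := by
  intro v w
  obtain ⟨k, hk⟩ := h v w
  have hgen : G.biperm c d ∈ {π | ∃ c d : Fin D, π = G.biperm c d} := ⟨c, d, rfl⟩
  exact ⟨_, Subgroup.zpow_mem _ (Subgroup.subset_closure hgen) k, hk⟩

section OfShifts

variable {D : ℕ} {M : Type} [AddCommGroup M] [Finite M]

-- Reducible, so that `rw` sees `(ofShifts s).W` as `M`.
abbrev ofShifts (s : Fin D → M) : CGraph D where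
  W := M
  B := M
  finW := ‹_›
  finB := ‹_›
  σ c := Equiv.addLeft (s c)

theorem biperm_ofShifts (s : Fin D → M) (c d : Fin D) :
    (ofShifts s).biperm c d = Equiv.addLeft (s c - s d) :=
  Equiv.ext fun x => show -s d + (s c + x) = s c - s d + x by abel

theorem connected_ofShifts {s : Fin D → M} {c d : Fin D}
    (h : AddSubgroup.zmultiples (s c - s d) = ⊤) : (ofShifts s).Connected :=
  connected_of_sameCycle _ c d fun v w => by
    rw [biperm_ofShifts, sameCycle_addLeft_iff, h]
    exact AddSubgroup.mem_top _

theorem faceSize_ofShifts (s : Fin 3 → M) (c d : Fin 3) (v : M) :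
    (ofShifts s).faceSize c d v = addOrderOf (s c - s d) := by
  rw [faceSize, biperm_ofShifts]
  exact card_sameCycle_addLeft _ v

theorem euler_ofShifts (s : Fin 3 → M) :
    (ofShifts s).euler = -(Nat.card M : ℤ) + (AddSubgroup.zmultiples (s 0 - s 1)).index
      + (AddSubgroup.zmultiples (s 0 - s 2)).index
      + (AddSubgroup.zmultiples (s 1 - s 2)).index := by
  rw [euler, faces, biperm_ofShifts, biperm_ofShifts, biperm_ofShifts, numCycles_addLeft,
    numCycles_addLeft, numCycles_addLeft]
  change _ - _ * (Nat.card M : ℤ) + _ = _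
  push_cast
  ring

end OfShifts

end CGraph

theorem ZMod.index_zmultiples_natCast (N k : ℕ) [NeZero N] :
    (AddSubgroup.zmultiples (k : ZMod N)).index = N.gcd k := by
  have hN : N ≠ 0 := NeZero.ne N
  have hmul := (AddSubgroup.zmultiples (k : ZMod N)).index_mul_card
  rw [Nat.card_zmultiples, ZMod.addOrderOf_coe k hN, Nat.card_zmod] at hmul
  have hcard : N / N.gcd k ≠ 0 :=
    (Nat.div_pos (Nat.gcd_le_left k (by omega)) (Nat.gcd_pos_of_pos_left k (by omega))).ne'
  rw [Nat.eq_div_of_mul_eq_left hcard hmul, Nat.div_div_self (Nat.gcd_dvd_left N k) hN]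

instance neZero_four_mul_add_two (g : ℕ) : NeZero (4 * g + 2) := ⟨by omega⟩

def genusShifts (g : ℕ) : Fin 3 → ZMod (4 * g + 2) :=
  ![(2 * g + 2 : ℕ), (2 * g + 1 : ℕ), 0]

theorem Nat.gcd_four_mul_add_two_two_mul_add_two (g : ℕ) :
    (4 * g + 2).gcd (2 * g + 2) = 2 := by
  rw [show 4 * g + 2 = 2 * (g + (g + 1)) by ring, show 2 * g + 2 = 2 * (g + 1) by ring,
    Nat.gcd_mul_left, Nat.coprime_add_self_left.mpr
    (Nat.coprime_self_add_right.mpr (Nat.coprime_one_right g)), mul_one]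

theorem Nat.gcd_four_mul_add_two_two_mul_add_one (g : ℕ) :
    (4 * g + 2).gcd (2 * g + 1) = 2 * g + 1 := by
  rw [show 4 * g + 2 = (2 * g + 1) * 2 by ring, Nat.gcd_mul_right_left]

theorem index_zmultiples_genusShifts_zero_sub_one (g : ℕ) :
    (AddSubgroup.zmultiples (genusShifts g 0 - genusShifts g 1)).index = 1 := by
  have : genusShifts g 0 - genusShifts g 1 = ((1 : ℕ) : ZMod (4 * g + 2)) := by
    simp only [genusShifts, Matrix.cons_val_zero, Matrix.cons_val_one]
    push_cast
    ring
  rw [this, ZMod.index_zmultiples_natCast, Nat.gcd_one_right]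

theorem index_zmultiples_genusShifts_zero_sub_two (g : ℕ) :
    (AddSubgroup.zmultiples (genusShifts g 0 - genusShifts g 2)).index = 2 := by
  rw [show genusShifts g 0 - genusShifts g 2 = (2 * g + 2 : ℕ) by simp [genusShifts],
    ZMod.index_zmultiples_natCast, Nat.gcd_four_mul_add_two_two_mul_add_two]

theorem index_zmultiples_genusShifts_one_sub_two (g : ℕ) :
    (AddSubgroup.zmultiples (genusShifts g 1 - genusShifts g 2)).index = 2 * g + 1 := by
  rw [show genusShifts g 1 - genusShifts g 2 = (2 * g + 1 : ℕ) by simp [genusShifts],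
    ZMod.index_zmultiples_natCast, Nat.gcd_four_mul_add_two_two_mul_add_one]

theorem addOrderOf_genusShifts_one_sub_two (g : ℕ) :
    addOrderOf (genusShifts g 1 - genusShifts g 2) = 2 := by
  rw [show genusShifts g 1 - genusShifts g 2 = (2 * g + 1 : ℕ) by simp [genusShifts],
    ZMod.addOrderOf_coe _ (NeZero.ne _), Nat.gcd_four_mul_add_two_two_mul_add_one]
  exact Nat.div_eq_of_eq_mul_left (by omega) (by ring)

theorem quartic_matrix_model_generates_all_genera :
    ∀ g : ℤ, 0 ≤ g →
      ∃ G : CGraph 3, G.Connected ∧ G.QuarticFeynman ∧ G.euler = 2 - 2 * g := by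
  intro g hg
  lift g to ℕ using hg
  refine ⟨CGraph.ofShifts (genusShifts g), ?_, ?_, ?_⟩
  · exact CGraph.connected_ofShifts (AddSubgroup.index_eq_one.mp
      (index_zmultiples_genusShifts_zero_sub_one g))
  · intro v
    rw [CGraph.faceSize_ofShifts, addOrderOf_genusShifts_one_sub_two]
  · rw [CGraph.euler_ofShifts, Nat.card_zmod, index_zmultiples_genusShifts_zero_sub_one,
      index_zmultiples_genusShifts_zero_sub_two, index_zmultiples_genusShifts_one_sub_two]
    push_cast
    ring
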